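/- In every 2-connected bipartite outerplanar graph that is not a single cycle, there exists an inner face whose boundary cycle (v_1, v_2, ..., v_{2i}) has d_G(v_j) = 2 for all 2 ≤ j ≤ 2i − 1 and d_G(v_1), d_G(v_{2i}) ≥ 3, and this face has even length 2i ≥ 4. -/

import Mathlib

variable {V : Type*} [Fintype V] [DecidableEq V]

/-- Out-degree of `v` in the digraph (arc set) `D`. -/
def outDeg (D : Finset (V × V)) (v : V) : ℕ := (D.filter fun a => a.1 = v).card

/-- In-degree of `v` in the digraph (arc set) `D`. -/
def inDeg (D : Finset (V × V)) (v : V) : ℕ := (D.filter fun a => a.2 = v).card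

/-- An arc set is Eulerian if every vertex has equal in- and out-degree. -/
def IsEulerian (H : Finset (V × V)) : Prop := ∀ v, outDeg H v = inDeg H v

instance (H : Finset (V × V)) : Decidable (IsEulerian H) := by
  unfold IsEulerian; infer_instance

/-- The Eulerian subdigraphs of `D`. -/
def eulerianSubs (D : Finset (V × V)) : Finset (Finset (V × V)) :=
  D.powerset.filter IsEulerian

/-- `D` is an AT-orientation: the number of even Eulerian subdigraphs differs from
the number of odd ones. -/
def IsAT (D : Finset (V × V)) : Prop :=
  ((eulerianSubs D).filter fun H => Even H.card).card ≠
    ((eulerianSubs D).filter fun H => Odd H.card).card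

/-- `D` is an orientation of the graph `G`: every arc is an edge of `G`,
and each edge of `G` gets exactly one direction. -/
def IsOrientation (G : SimpleGraph V) (D : Finset (V × V)) : Prop :=
  (∀ a ∈ D, G.Adj a.1 a.2) ∧ ∀ u v : V, G.Adj u v → ((u, v) ∈ D ↔ (v, u) ∉ D)

/-- `D` contains a directed closed walk, equivalently a directed cycle. -/
def HasDirCycle (D : Finset (V × V)) : Prop :=
  ∃ (a : V) (l : List V), List.Chain (fun u v => (u, v) ∈ D) a (l ++ [a])

/-- Outerplanar: the vertices can be placed at distinct positions on a circle so that
all edges are pairwise noncrossing chords. -/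
def Outerplanar (G : SimpleGraph V) : Prop :=
  ∃ p : V → ℕ, Function.Injective p ∧ ∀ a b c d : V, G.Adj a b → G.Adj c d →
    ¬ (p a < p c ∧ p c < p b ∧ p b < p d)

/-- 2-connected: at least 3 vertices, connected, and deleting any vertex leaves it connected. -/
def TwoConnected (G : SimpleGraph V) : Prop :=
  3 ≤ Fintype.card V ∧ G.Connected ∧ ∀ v : V, (SimpleGraph.induce {w | w ≠ v} G).Connected

/-- `G` is a cycle: connected and 2-regular. -/
def IsCycleGraph (G : SimpleGraph V) [DecidableRel G.Adj] : Prop :=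
  G.Connected ∧ ∀ v, G.degree v = 2

/-- The arcs of a path/walk given by a list of vertices. -/
def pathArcs (l : List V) : Finset (V × V) := (l.zip l.tail).toFinset

/-- Weighted out-degree. -/
def wOutDeg (D : Finset (V × V)) (w : V × V → ℕ) (v : V) : ℕ :=
  ∑ a ∈ D.filter (fun a => a.1 = v), w a

/-- Weighted in-degree. -/
def wInDeg (D : Finset (V × V)) (w : V × V → ℕ) (v : V) : ℕ :=
  ∑ a ∈ D.filter (fun a => a.2 = v), w a

/-- Weighted Eulerian subdigraph. -/
def IsWEulerian (H : Finset (V × V)) (w : V × V → ℕ) : Prop :=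
  ∀ v, wOutDeg H w v = wInDeg H w v

/-!
Number the vertices `v 0, …, v (n - 1)` in the circular order of the outerplanar drawing. Every
position `a ≤ i < b` under an edge `(a, b)` with `a + 1 < b` is spanned by a strictly shorter
edge: deleting an endpoint keeps `G` connected, and the edge that leaves the arc under `(a, b)`
cannot cross `(a, b)`. Hence consecutive vertices are adjacent, so the circle is a Hamiltonian
cycle of `G`, and since `G` is not a cycle it has a chord. Under a shortest chord `(a, b)` no
other edge fits, so `v (a + 1), …, v (b - 1)` have degree 2 while `v a` and `v b` have a third
neighbour on the circle. The face `v a, …, v b` is a path closed by the chord; a 2-colouring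
alternates along the path, so `b - a` is odd and the face has even length at least 4.
-/

section

-- shadows the ambient `V`, whose `Fintype` and `DecidableEq` instances are only wanted for degrees
variable {V : Type*} {G : SimpleGraph V}

theorem SimpleGraph.Preconnected.exists_adj_mem_not_mem (hG : G.Preconnected) {S : Set V}
    {x y : V} (hx : x ∈ S) (hy : y ∉ S) : ∃ u w, G.Adj u w ∧ u ∈ S ∧ w ∉ S := by
  obtain ⟨d, -, hd⟩ := (hG x y).some.exists_boundary_dart S hx hy
  exact ⟨_, _, d.adj, hd⟩

theorem SimpleGraph.Coloring.odd_of_adj_of_path (C : G.Coloring (ZMod 2)) {f : ℕ → V}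
    {s t : ℕ} (hpath : ∀ i < t, G.Adj (f (s + i)) (f (s + i + 1)))
    (h : G.Adj (f s) (f (s + t))) : Odd t := by
  have hstep : ∀ x y : ZMod 2, x ≠ y → y = x + 1 := by decide
  have hcolor : ∀ i ≤ t, C (f (s + i)) = C (f s) + i := by
    intro i hi
    induction i with
    | zero => simp
    | succ i ih =>
      rw [← add_assoc, hstep _ _ (C.valid (hpath i (by omega))), ih (by omega), Nat.cast_succ,
        add_assoc]
  have hne := C.valid h
  rwa [hcolor t le_rfl, ne_eq, left_eq_add, ZMod.natCast_eq_zero_iff_even,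
    Nat.not_even_iff_odd] at hne

theorem List.mem_zip_cons_map_range' {α : Type*} (f : ℕ → α) (s m : ℕ) {x y : α} :
    (x, y) ∈ (f s :: (range' (s + 1) m).map f).zip ((range' (s + 1) m).map f ++ [f s]) ↔
      ∃ j k, ((s ≤ j ∧ j < s + m ∧ k = j + 1) ∨ (j = s + m ∧ k = s)) ∧
        f j = x ∧ f k = y := by
  have hcons : f s :: (range' (s + 1) m).map f = (range' s (m + 1)).map f := by
    rw [range'_succ, map_cons]
  have hrot : (range' (s + 1) m).map f ++ [f s] = ((range' s (m + 1)).rotate 1).map f := by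
    rw [range'_succ, rotate_cons_succ, rotate_zero, map_append, map_singleton]
  rw [hcons, hrot, zip_map, mem_map]
  simp only [mem_iff_getElem, getElem_zip, getElem_rotate, getElem_range', length_range',
    Prod.map, Prod.mk.injEq, length_zip, length_rotate, min_self]
  constructor
  · rintro ⟨⟨j, k⟩, ⟨i, hi, hij⟩, rfl, rfl⟩
    simp only [Prod.mk.injEq] at hij
    refine ⟨j, k, ?_, rfl, rfl⟩
    rcases Nat.lt_or_ge i m with h | h
    · rw [Nat.mod_eq_of_lt (by omega)] at hij
      omega
    · rw [show i + 1 = m + 1 by omega, Nat.mod_self] at hij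
      omega
  · rintro ⟨j, k, h | h, rfl, rfl⟩
    · refine ⟨(j, k), ⟨j - s, by omega, ?_⟩, rfl, rfl⟩
      rw [Nat.mod_eq_of_lt (by omega), Prod.mk.injEq]
      omega
    · refine ⟨(j, k), ⟨m, by omega, ?_⟩, rfl, rfl⟩
      rw [Nat.mod_self, Prod.mk.injEq]
      omega

theorem List.dropLast_range' (s n : ℕ) : (range' s n).dropLast = range' s (n - 1) := by
  cases n with
  | zero => rfl
  | succ n => rw [range'_concat, dropLast_concat, Nat.add_sub_cancel]

/-- The vertices of `G` listed as `v 0, …, v (n - 1)` around a circle, with no two edges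
crossing; `v i` for `i ≥ n` is meaningless. -/
structure CircleLayout (G : SimpleGraph V) where
  n : ℕ
  v : ℕ → V
  injOn : Set.InjOn v (Set.Iio n)
  surj : ∀ x, ∃ i < n, v i = x
  not_cross : ∀ {i j k l}, l < n → G.Adj (v i) (v j) → G.Adj (v k) (v l) →
    i < k → k < j → j < l → False

theorem Outerplanar.exists_circleLayout [Fintype V] [Nonempty V] (h : Outerplanar G) :
    ∃ L : CircleLayout G, L.n = Fintype.card V := by
  obtain ⟨p, hp, hcross⟩ := h
  let : LinearOrder V := LinearOrder.lift' p hp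
  let e : Fin (Fintype.card V) ≃o V := monoEquivOfFin V rfl
  let v : ℕ → V := fun i =>
    if h : i < Fintype.card V then e ⟨i, h⟩ else Classical.arbitrary V
  have hv : ∀ {i} (h : i < Fintype.card V), v i = e ⟨i, h⟩ := fun h => dif_pos h
  have hmono : ∀ {i j}, i < j → j < Fintype.card V → p (v i) < p (v j) := fun hij hj => by
    rw [hv (hij.trans hj), hv hj]
    exact e.strictMono (Fin.mk_lt_mk.2 hij)
  refine ⟨⟨Fintype.card V, v, fun i hi j hj h => ?_, fun x => ?_, ?_⟩, rfl⟩
  · rw [hv hi, hv hj] at h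
    exact Fin.mk.inj_iff.1 (e.injective h)
  · exact ⟨e.symm x, (e.symm x).2, by rw [hv (e.symm x).2, Fin.eta, e.apply_symm_apply]⟩
  · intro i j k l hl hij hkl hik hkj hjl
    exact hcross _ _ _ _ hij hkl
      ⟨hmono hik (by omega), hmono hkj (by omega), hmono hjl hl⟩

namespace CircleLayout

variable (L : CircleLayout G)

def Consecutive (i j : ℕ) : Prop :=
  j = i + 1 ∨ i = j + 1 ∨ (i = 0 ∧ j + 1 = L.n) ∨ (j = 0 ∧ i + 1 = L.n)

def ConsecutiveAdj : Prop :=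
  ∀ {i j}, i < L.n → j < L.n → L.Consecutive i j → G.Adj (L.v i) (L.v j)

def IsChord (a b : ℕ) : Prop :=
  a < b ∧ b < L.n ∧ G.Adj (L.v a) (L.v b) ∧ ¬L.Consecutive a b

def IsShortestChord (a b : ℕ) : Prop :=
  L.IsChord a b ∧ ∀ c d, L.IsChord c d → b - a ≤ d - c

def arc (a b : ℕ) : List V := (List.range' (a + 1) (b - a)).map L.v

variable {L}

theorem Consecutive.symm {i j : ℕ} (h : L.Consecutive i j) : L.Consecutive j i := by
  unfold Consecutive at *
  omega

theorem exists_consecutive (hn : 3 ≤ L.n) {i : ℕ} (hi : i < L.n) :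
    ∃ p q, p < L.n ∧ q < L.n ∧ p ≠ q ∧
      ∀ j < L.n, (L.Consecutive i j ↔ j = p ∨ j = q) := by
  unfold Consecutive
  by_cases h0 : i = 0
  · exact ⟨1, L.n - 1, by omega, by omega, by omega, fun j _ => by omega⟩
  by_cases hlast : i + 1 = L.n
  · exact ⟨i - 1, 0, by omega, by omega, by omega, fun j _ => by omega⟩
  · exact ⟨i - 1, i + 1, by omega, by omega, by omega, fun j _ => by omega⟩

theorem IsChord.add_one_lt {a b : ℕ} (hab : L.IsChord a b) : a + 1 < b := by
  obtain ⟨hlt, -, -, hnc⟩ := hab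
  unfold Consecutive at hnc
  omega

theorem mem_Ioo_of_adj {a b j k : ℕ} (hb : b < L.n) (hk : k < L.n)
    (hab : G.Adj (L.v a) (L.v b)) (hjk : G.Adj (L.v j) (L.v k)) (hj : j ∈ Set.Ioo a b)
    (hka : k ≠ a) (hkb : k ≠ b) : k ∈ Set.Ioo a b := by
  rw [Set.mem_Ioo] at *
  by_contra hout
  rcases (by omega : k < a ∨ b < k) with hka' | hbk
  · exact L.not_cross hb hjk.symm hab hka' hj.1 hj.2
  · exact L.not_cross hk hab hjk hj.1 hj.2 hbk

theorem exists_adj_mem_not_mem {r y j₀ : ℕ} {I : Set ℕ}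
    (hconn : (G.induce {w | w ≠ L.v r}).Connected) (hI : I ⊆ Set.Iio L.n) (hr : r < L.n)
    (hrI : r ∉ I) (hj₀ : j₀ ∈ I) (hy : y < L.n) (hyI : y ∉ I) (hyr : y ≠ r) :
    ∃ j ∈ I, ∃ k < L.n, k ∉ I ∧ k ≠ r ∧ G.Adj (L.v j) (L.v k) := by
  have hne : ∀ {i}, i < L.n → i ≠ r → L.v i ≠ L.v r := fun hi hir h =>
    hir (L.injOn hi hr h)
  obtain ⟨⟨u, hu⟩, ⟨w, hw⟩, huw, ⟨j, hj, rfl⟩, hwI⟩ :=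
    hconn.preconnected.exists_adj_mem_not_mem (S := {x | ∃ j ∈ I, L.v j = x.1})
      (x := ⟨L.v j₀, hne (hI hj₀) (ne_of_mem_of_not_mem hj₀ hrI)⟩)
      (y := ⟨L.v y, hne hy hyr⟩)
      ⟨j₀, hj₀, rfl⟩ (fun ⟨j, hj, h⟩ => hyI (L.injOn hy (hI hj) h.symm ▸ hj))
  obtain ⟨k, hk, rfl⟩ := L.surj w
  exact ⟨j, hj, k, hk, fun hkI => hwI ⟨k, hkI, rfl⟩, fun hkr => hw (hkr ▸ rfl), huw⟩

theorem exists_shorter_adj_of_adj (hdel : ∀ x, (G.induce {w | w ≠ x}).Connected)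
    {a b i : ℕ} (hb : b < L.n) (hab : G.Adj (L.v a) (L.v b)) (hlong : a + 1 < b)
    (hai : a ≤ i) (hib : i < b) :
    ∃ c d, a ≤ c ∧ c ≤ i ∧ i < d ∧ d ≤ b ∧ d - c < b - a ∧
      G.Adj (L.v c) (L.v d) := by
  rcases hai.eq_or_lt with rfl | hai
  · obtain ⟨j, hj, k, hk, hkI, hkb, hjk⟩ := L.exists_adj_mem_not_mem (hdel (L.v b))
      (I := Set.Ioo a b) (fun j hj => hj.2.trans hb) hb (by simp) (j₀ := a + 1)
      ⟨by omega, hlong⟩ (y := a) (by omega) (by simp) (by omega)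
    obtain rfl : k = a := by
      by_contra hka
      exact hkI (L.mem_Ioo_of_adj hb hk hab hjk hj hka hkb)
    rw [Set.mem_Ioo] at hj
    exact ⟨k, j, le_rfl, le_rfl, hj.1, hj.2.le, by omega, hjk.symm⟩
  · obtain ⟨j, hj, k, hk, hkI, hka, hjk⟩ := L.exists_adj_mem_not_mem (hdel (L.v a))
      (I := Set.Ioc a i) (fun j hj => by simp only [Set.mem_Ioc, Set.mem_Iio] at *; omega)
      (by omega) (by simp) (j₀ := i) ⟨hai, le_rfl⟩ hb (by simp; omega) (by omega)
    rw [Set.mem_Ioc] at hj hkI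
    have hk' : k = b ∨ k ∈ Set.Ioo a b := by
      by_cases hkb : k = b
      · exact Or.inl hkb
      · exact Or.inr (L.mem_Ioo_of_adj hb hk hab hjk ⟨hj.1, by omega⟩ hka hkb)
    rw [Set.mem_Ioo] at hk'
    exact ⟨j, k, by omega, hj.2, by omega, by omega, by omega, hjk⟩

theorem adj_succ (hconn : G.Connected) (hdel : ∀ x, (G.induce {w | w ≠ x}).Connected)
    {i : ℕ} (hi : i + 1 < L.n) : G.Adj (L.v i) (L.v (i + 1)) := by
  suffices h : ∀ m a b, b - a = m → a ≤ i → i < b → b < L.n → G.Adj (L.v a) (L.v b) →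
      G.Adj (L.v i) (L.v (i + 1)) by
    obtain ⟨u, w, huw, ⟨a, ha, rfl⟩, hw⟩ := hconn.preconnected.exists_adj_mem_not_mem
      (S := L.v '' Set.Iic i) (Set.mem_image_of_mem _ (le_refl i)) (by
        rintro ⟨j, hj, h⟩
        rw [Set.mem_Iic] at hj
        have := L.injOn (show j < L.n by omega) hi h
        omega)
    obtain ⟨b, hb, rfl⟩ := L.surj w
    exact h _ a b rfl ha (not_le.1 fun hbi => hw ⟨b, hbi, rfl⟩) hb huw
  intro m
  induction m using Nat.strong_induction_on with
  | _ m ih =>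
    rintro a b rfl hai hib hb hab
    by_cases hlong : a + 1 < b
    · obtain ⟨c, d, hac, hci, hid, hdb, hlt, hcd⟩ :=
        L.exists_shorter_adj_of_adj hdel hb hab hlong hai hib
      exact ih _ hlt c d rfl hci hid (by omega) hcd
    · obtain rfl : a = i := by omega
      obtain rfl : b = a + 1 := by omega
      exact hab

theorem adj_zero_last (hconn : G.Connected) (hdel : ∀ x, (G.induce {w | w ≠ x}).Connected)
    (hn : 2 ≤ L.n) : G.Adj (L.v 0) (L.v (L.n - 1)) := by
  classical
  have h1 : G.Adj (L.v 0) (L.v 1) := L.adj_succ hconn hdel (by omega)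
  set B := Nat.findGreatest (fun k => G.Adj (L.v 0) (L.v k)) (L.n - 1)
  have hB : G.Adj (L.v 0) (L.v B) :=
    Nat.findGreatest_spec (P := fun k => G.Adj (L.v 0) (L.v k)) (by omega : 1 ≤ L.n - 1) h1
  have hB1 : 1 ≤ B := Nat.le_findGreatest (by omega) h1
  rcases (Nat.findGreatest_le (L.n - 1) : B ≤ L.n - 1).eq_or_lt with hBn | hBn
  · rwa [← hBn]
  obtain ⟨j, hj, k, hk, hkI, hkB, hjk⟩ := L.exists_adj_mem_not_mem (hdel (L.v B))
    (I := Set.Ioo B L.n) (fun j hj => hj.2) (by omega) (by simp) (j₀ := B + 1)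
    ⟨by omega, by omega⟩ (y := 0) (by omega) (by simp) (by omega)
  rw [Set.mem_Ioo] at hj hkI
  rcases Nat.eq_zero_or_pos k with rfl | hk0
  · exact (Nat.findGreatest_is_greatest hj.1 (by omega) hjk.symm).elim
  · have := L.mem_Ioo_of_adj (by omega) hj.2 hB hjk.symm ⟨hk0, by omega⟩ (by omega) (by omega)
    rw [Set.mem_Ioo] at this
    omega

theorem consecutiveAdj_of_connected (hconn : G.Connected)
    (hdel : ∀ x, (G.induce {w | w ≠ x}).Connected) (hn : 2 ≤ L.n) : L.ConsecutiveAdj := by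
  have hlast := L.adj_zero_last hconn hdel hn
  rintro i j hi hj (rfl | rfl | ⟨rfl, hj'⟩ | ⟨rfl, hi'⟩)
  · exact L.adj_succ hconn hdel hj
  · exact (L.adj_succ hconn hdel hi).symm
  · rwa [show j = L.n - 1 by omega]
  · rw [show i = L.n - 1 by omega]
    exact hlast.symm

section Degree

variable [Fintype V] [DecidableEq V] [DecidableRel G.Adj]

theorem degree_eq_two (hn : 3 ≤ L.n) {i : ℕ} (hi : i < L.n)
    (h : ∀ j < L.n, G.Adj (L.v i) (L.v j) ↔ L.Consecutive i j) : G.degree (L.v i) = 2 := by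
  obtain ⟨p, q, hp, hq, hpq, hcons⟩ := exists_consecutive hn hi
  have hnbr : G.neighborFinset (L.v i) = {L.v p, L.v q} := by
    ext x
    obtain ⟨j, hj, rfl⟩ := L.surj x
    simp only [SimpleGraph.mem_neighborFinset, Finset.mem_insert, Finset.mem_singleton, h j hj,
      hcons j hj, L.injOn.eq_iff hj hp, L.injOn.eq_iff hj hq]
  rw [← SimpleGraph.card_neighborFinset_eq_degree, hnbr, Finset.card_pair (L.injOn.ne hp hq hpq)]

theorem three_le_degree (hcyc : L.ConsecutiveAdj) (hn : 3 ≤ L.n) {i j : ℕ} (hi : i < L.n)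
    (hj : j < L.n) (hij : G.Adj (L.v i) (L.v j)) (hnc : ¬L.Consecutive i j) :
    3 ≤ G.degree (L.v i) := by
  obtain ⟨p, q, hp, hq, hpq, hcons⟩ := exists_consecutive hn hi
  have hjp : j ≠ p := fun h => hnc ((hcons j hj).2 (Or.inl h))
  have hjq : j ≠ q := fun h => hnc ((hcons j hj).2 (Or.inr h))
  have hsub : {L.v p, L.v q, L.v j} ⊆ G.neighborFinset (L.v i) := by
    simp only [Finset.insert_subset_iff, Finset.singleton_subset_iff,
      SimpleGraph.mem_neighborFinset]
    exact ⟨hcyc hi hp ((hcons p hp).2 (Or.inl rfl)), hcyc hi hq ((hcons q hq).2 (Or.inr rfl)),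
      hij⟩
  rw [← SimpleGraph.card_neighborFinset_eq_degree]
  refine le_of_eq_of_le ?_ (Finset.card_le_card hsub)
  exact (Finset.card_eq_three.2 ⟨_, _, _, L.injOn.ne hp hq hpq, L.injOn.ne hp hj hjp.symm,
    L.injOn.ne hq hj hjq.symm, rfl⟩).symm

theorem degree_eq_two_of_forall_not_isChord (hcyc : L.ConsecutiveAdj) (hn : 3 ≤ L.n)
    (h : ∀ a b, ¬L.IsChord a b) (x : V) : G.degree x = 2 := by
  obtain ⟨i, hi, rfl⟩ := L.surj x
  refine L.degree_eq_two hn hi fun j hj => ⟨fun hij => ?_, hcyc hi hj⟩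
  by_contra hc
  rcases lt_trichotomy i j with hlt | rfl | hgt
  · exact h i j ⟨hlt, hj, hij, hc⟩
  · exact hij.ne rfl
  · exact h j i ⟨hgt, hi, hij.symm, fun h' => hc h'.symm⟩

end Degree

theorem exists_isShortestChord (h : ∃ a b, L.IsChord a b) : ∃ a b, L.IsShortestChord a b := by
  classical
  have hex : ∃ m a b, L.IsChord a b ∧ b - a = m := by
    obtain ⟨a, b, hab⟩ := h
    exact ⟨_, a, b, hab, rfl⟩
  obtain ⟨a, b, hab, hm⟩ := Nat.find_spec hex
  exact ⟨a, b, hab, fun c d hcd => hm ▸ Nat.find_min' hex ⟨c, d, hcd, rfl⟩⟩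

theorem IsChord.odd (hcyc : L.ConsecutiveAdj) (C : G.Coloring (ZMod 2)) {a b : ℕ}
    (hab : L.IsChord a b) : Odd (b - a) := by
  obtain ⟨hlt, hb, hadj, -⟩ := hab
  refine C.odd_of_adj_of_path (s := a) (t := b - a)
    (fun i hi => hcyc (by omega) (by omega) (Or.inl rfl)) ?_
  rwa [Nat.add_sub_cancel' hlt.le]

namespace IsShortestChord

theorem adj_iff_consecutive {a b j k : ℕ} (hab : L.IsShortestChord a b)
    (hcyc : L.ConsecutiveAdj) (hj : j ∈ Set.Ioo a b) (hk : k < L.n) :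
    G.Adj (L.v j) (L.v k) ↔ L.Consecutive j k := by
  obtain ⟨⟨hlt, hb, hadj, -⟩, hmin⟩ := hab
  refine ⟨fun hjk => ?_, hcyc (hj.2.trans hb) hk⟩
  have hk' : a ≤ k ∧ k ≤ b := by
    by_cases hka : k = a
    · omega
    by_cases hkb : k = b
    · omega
    have := L.mem_Ioo_of_adj hb hk hadj hjk hj hka hkb
    exact ⟨this.1.le, this.2.le⟩
  rw [Set.mem_Ioo] at hj
  by_contra hc
  rcases lt_trichotomy j k with hjk' | rfl | hkj
  · have := hmin j k ⟨hjk', hk, hjk, hc⟩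
    omega
  · exact hjk.ne rfl
  · have := hmin k j ⟨hkj, by omega, hjk.symm, fun h => hc h.symm⟩
    omega

theorem eq_add_one_or {a b j k : ℕ} (hab : L.IsShortestChord a b) (hcyc : L.ConsecutiveAdj)
    (hj : j ∈ Set.Icc a b) (hk : k ∈ Set.Icc a b) (hjk : G.Adj (L.v j) (L.v k)) :
    k = j + 1 ∨ j = k + 1 ∨ (j = a ∧ k = b) ∨ (j = b ∧ k = a) := by
  have hb := hab.1.2.1
  have hne : j ≠ k := fun h => hjk.ne (congrArg L.v h)
  rw [Set.mem_Icc] at hj hk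
  by_cases hj' : j ∈ Set.Ioo a b
  · have := (hab.adj_iff_consecutive hcyc hj' (by omega)).1 hjk
    unfold Consecutive at this
    rw [Set.mem_Ioo] at hj'
    omega
  by_cases hk' : k ∈ Set.Ioo a b
  · have := (hab.adj_iff_consecutive hcyc hk' (by omega)).1 hjk.symm
    unfold Consecutive at this
    rw [Set.mem_Ioo] at hk'
    omega
  rw [Set.mem_Ioo] at hj' hk'
  omega

end IsShortestChord

theorem mem_cons_arc {a b : ℕ} (hab : a ≤ b) {x : V} (hx : x ∈ L.v a :: L.arc a b) :
    ∃ j ∈ Set.Icc a b, L.v j = x := by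
  simp only [arc, List.mem_cons, List.mem_map, List.mem_range'_1] at hx
  rcases hx with rfl | ⟨j, hj, rfl⟩
  · exact ⟨a, ⟨le_rfl, hab⟩, rfl⟩
  · exact ⟨j, ⟨by omega, by omega⟩, rfl⟩

theorem nodup_cons_arc {a b : ℕ} (hab : a ≤ b) (hb : b < L.n) :
    (L.v a :: L.arc a b).Nodup := by
  rw [arc, ← List.map_cons, ← List.range'_succ]
  exact (List.nodup_range' ..).map_on fun x hx y hy =>
    L.injOn (show x < L.n by simp at hx; omega) (show y < L.n by simp at hy; omega)

theorem mem_zip_cons_arc {a b : ℕ} (hab : a ≤ b) {x y : V} :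
    (x, y) ∈ (L.v a :: L.arc a b).zip (L.arc a b ++ [L.v a]) ↔
      ∃ j k, ((a ≤ j ∧ j < b ∧ k = j + 1) ∨ (j = b ∧ k = a)) ∧
        L.v j = x ∧ L.v k = y := by
  rw [arc, List.mem_zip_cons_map_range', Nat.add_sub_cancel' hab]

theorem getLast_arc {a b : ℕ} (hab : a < b) (h : L.arc a b ≠ []) :
    (L.arc a b).getLast h = L.v b := by
  simp only [arc, List.getLast_map, List.getLast_range']
  congr 1
  omega

theorem IsChord.isChain_cons_arc {a b : ℕ} (hab : L.IsChord a b) (hcyc : L.ConsecutiveAdj) :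
    List.IsChain G.Adj (L.v a :: (L.arc a b ++ [L.v a])) := by
  obtain ⟨hlt, hb, hadj, -⟩ := hab
  refine List.isChain_cons_append_singleton_iff_forall₂.2
    (List.forall₂_iff_zip.2 ⟨by simp, fun hxy => ?_⟩)
  obtain ⟨j, k, ⟨-, hj, rfl⟩ | ⟨rfl, rfl⟩, rfl, rfl⟩ :=
    (L.mem_zip_cons_arc hlt.le).1 hxy
  · exact hcyc (by omega) (by omega) (Or.inl rfl)
  · exact hadj.symm

theorem IsShortestChord.mem_zip_cons_arc_of_adj {a b : ℕ} (hab : L.IsShortestChord a b)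
    (hcyc : L.ConsecutiveAdj) {x y : V} (hx : x ∈ L.v a :: L.arc a b)
    (hy : y ∈ L.v a :: L.arc a b) (hxy : G.Adj x y) :
    (x, y) ∈ (L.v a :: L.arc a b).zip (L.arc a b ++ [L.v a]) ∨
      (y, x) ∈ (L.v a :: L.arc a b).zip (L.arc a b ++ [L.v a]) := by
  have hle := hab.1.1.le
  obtain ⟨j, hj, rfl⟩ := L.mem_cons_arc hle hx
  obtain ⟨k, hk, rfl⟩ := L.mem_cons_arc hle hy
  simp only [L.mem_zip_cons_arc hle]
  rcases hab.eq_add_one_or hcyc hj hk hxy with rfl | rfl | ⟨rfl, rfl⟩ | ⟨rfl, rfl⟩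
  · exact Or.inl ⟨j, j + 1, Or.inl ⟨hj.1, hk.2, rfl⟩, rfl, rfl⟩
  · exact Or.inr ⟨k, k + 1, Or.inl ⟨hk.1, hj.2, rfl⟩, rfl, rfl⟩
  · exact Or.inr ⟨k, j, Or.inr ⟨rfl, rfl⟩, rfl, rfl⟩
  · exact Or.inl ⟨j, k, Or.inr ⟨rfl, rfl⟩, rfl, rfl⟩

theorem IsShortestChord.degree_eq_two_of_mem_dropLast_arc [Fintype V] [DecidableEq V]
    [DecidableRel G.Adj] {a b : ℕ} (hab : L.IsShortestChord a b) (hcyc : L.ConsecutiveAdj)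
    (hn : 3 ≤ L.n) {x : V} (hx : x ∈ (L.arc a b).dropLast) : G.degree x = 2 := by
  rw [arc, ← List.map_dropLast, List.dropLast_range'] at hx
  obtain ⟨j, hj, rfl⟩ := List.mem_map.1 hx
  rw [List.mem_range'_1] at hj
  have hb := hab.1.2.1
  exact L.degree_eq_two hn (by omega) fun k hk =>
    hab.adj_iff_consecutive hcyc ⟨by omega, by omega⟩ hk

end CircleLayout

end

theorem stmt13 (G : SimpleGraph V) [DecidableRel G.Adj]
    (h2 : TwoConnected G) (hop : Outerplanar G) (hbip : G.Colorable 2)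
    (hnc : ¬ IsCycleGraph G) :
    ∃ (u : V) (l : List V), l ≠ [] ∧ (u :: l).Nodup ∧ (4 ≤ (u :: l).length ∧ Even (u :: l).length) ∧
      List.Chain G.Adj u (l ++ [u]) ∧
      (∀ x ∈ u :: l, ∀ y ∈ u :: l, G.Adj x y →
        ((x, y) ∈ (u :: l).zip (l ++ [u]) ∨ (y, x) ∈ (u :: l).zip (l ++ [u]))) ∧
      (∀ x ∈ l.dropLast, G.degree x = 2) ∧
      3 ≤ G.degree u ∧ ∀ h : l ≠ [], 3 ≤ G.degree (l.getLast h) := by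
  obtain ⟨hcard, hconn, hdel⟩ := h2
  have : Nonempty V := Fintype.card_pos_iff.1 (by omega)
  obtain ⟨L, hL⟩ := hop.exists_circleLayout
  have hn : 3 ≤ L.n := hL ▸ hcard
  have hcyc : L.ConsecutiveAdj := L.consecutiveAdj_of_connected hconn hdel (by omega)
  obtain ⟨a, b, hab⟩ := L.exists_isShortestChord (by
    by_contra! h
    exact hnc ⟨hconn, L.degree_eq_two_of_forall_not_isChord hcyc hn h⟩)
  obtain ⟨C⟩ := hbip
  obtain ⟨m, hm⟩ := hab.1.odd hcyc C
  have hlong := hab.1.add_one_lt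
  have ⟨hlt, hb, hadj, hnadj⟩ := hab.1
  refine ⟨L.v a, L.arc a b, by simp [CircleLayout.arc]; omega, L.nodup_cons_arc hlt.le hb,
    ?_, hab.1.isChain_cons_arc hcyc, fun x hx y hy => hab.mem_zip_cons_arc_of_adj hcyc hx hy,
    fun x => hab.degree_eq_two_of_mem_dropLast_arc hcyc hn,
    L.three_le_degree hcyc hn (hlt.trans hb) hb hadj hnadj, fun h => ?_⟩
  · simp only [CircleLayout.arc, List.length_cons, List.length_map, List.length_range']
    exact ⟨by omega, m + 1, by omega⟩
  · rw [L.getLast_arc hlt]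
    exact L.three_le_degree hcyc hn hb (hlt.trans hb) hadj.symm fun h => hnadj h.symm
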